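/- For every admissible multi-index k = (k₁,…,k_d), every positive integer r, and every q ∈ (0,1), ζ[k; r : q) < ζ[2 : q]. -/

import Mathlib

open Finset Filter

/-- The q-integer [m:q] = (1-q^m)/(1-q). -/
noncomputable def qint (q : ℝ) (m : ℕ) : ℝ := (1 - q ^ m) / (1 - q)

/-- Tail of the multiple q-zeta value: sum over m₁ > ⋯ > m_d > n. -/
noncomputable def qZeta {d : ℕ} (q : ℝ) (k : Fin d → ℕ) (n : ℕ) : ℝ :=
  ∑' m : {m : Fin d → ℕ // StrictAnti m ∧ ∀ i, n < m i},
    ∏ i, q ^ (m.1 i * (k i - 1)) / (qint q (m.1 i)) ^ (k i)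

/-- The modified multiple q-zeta value ζ[k₁,…,k_d; r : q). -/
noncomputable def qZetaR {d : ℕ} (q : ℝ) (k : Fin d → ℕ) (r : ℕ) : ℝ :=
  ∑' m : {m : Fin (d + 1) → ℕ // StrictAnti m ∧ ∀ i, 0 < m i},
    (∏ i : Fin d, q ^ (m.1 i.castSucc * (k i - 1)) / (qint q (m.1 i.castSucc)) ^ (k i))
      / (m.1 (Fin.last d) : ℝ) ^ r

/-- Multiple zeta value. -/
noncomputable def mzv {d : ℕ} (k : Fin d → ℕ) : ℝ :=
  ∑' m : {m : Fin d → ℕ // StrictAnti m ∧ ∀ i, 0 < m i},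
    ∏ i, (1 : ℝ) / (m.1 i : ℝ) ^ (k i)

/-- Akhilesh's double tail of a multiple zeta value. -/
noncomputable def dtail {d : ℕ} (hd : 0 < d) (k : Fin d → ℕ) (p n : ℕ) : ℝ :=
  ∑' m : {m : Fin d → ℕ // StrictAnti m ∧ ∀ i, n < m i},
    ((Nat.choose (m.1 ⟨0, hd⟩ + p) p : ℝ))⁻¹ * ∏ i, (1 : ℝ) / (m.1 i : ℝ) ^ (k i)


/-! With `w m = q^m / [m:q]^2` and `T n = ∑_{m > n} w m`, the relation `[m+1:q] = 1 + q [m:q]`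
makes the series telescope: `w (m+1) ≤ q^(m+1) / [m:q] - q^(m+2) / [m+1:q]`, so
`T m ≤ q^(m+1) / [m:q]` and hence `∑_{m > n} T m / [m:q] ≤ q T n`.
Peeling off the smallest summation index, a factor with exponent `k ≥ 1` is at most `1 / [m:q]`
and the one for the largest index (`k₁ ≥ 2`) at most `w m`, so by induction every tail of the
nested sum is bounded by `T`. The last index contributes `1 / m^r ≤ 1 / [m:q]`, which gives
`ζ[k; r : q) ≤ q ζ[2 : q] < ζ[2 : q]`. All series are summed in `ℝ≥0∞` to avoid summability
side conditions. -/

open scoped ENNReal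

theorem Fin.strictAnti_snoc_iff {α : Type*} [Preorder α] {n : ℕ} {f : Fin n → α} {x : α} :
    StrictAnti (Fin.snoc f x : Fin (n + 1) → α) ↔ StrictAnti f ∧ ∀ i, x < f i := by
  refine ⟨fun h => ⟨fun a b hab => ?_, fun i => ?_⟩, fun ⟨hf, hx⟩ a b hab => ?_⟩
  · simpa using h (Fin.castSucc_lt_castSucc_iff.2 hab)
  · simpa using h (Fin.castSucc_lt_last i)
  · induction b using Fin.lastCases with
    | last => obtain ⟨a, rfl⟩ := Fin.exists_castSucc_eq.2 hab.ne; simpa using hx a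
    | cast b =>
      obtain ⟨a, rfl⟩ := Fin.exists_castSucc_eq.2 (hab.trans (Fin.castSucc_lt_last b)).ne
      simpa using hf (Fin.castSucc_lt_castSucc_iff.1 hab)

abbrev DecTuple (j n : ℕ) : Type := {m : Fin j → ℕ // StrictAnti m ∧ ∀ i, n < m i}

namespace DecTuple

variable {j n : ℕ}

theorem snoc_prop_iff {m : Fin j → ℕ} {x : ℕ} :
    (StrictAnti (Fin.snoc m x : Fin (j + 1) → ℕ) ∧ ∀ i, n < (Fin.snoc m x : Fin (j + 1) → ℕ) i) ↔
      n < x ∧ StrictAnti m ∧ ∀ i, x < m i := by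
  simp only [Fin.strictAnti_snoc_iff, Fin.forall_fin_succ', Fin.snoc_castSucc, Fin.snoc_last]
  exact ⟨fun ⟨⟨hm, hx⟩, _, hn⟩ => ⟨hn, hm, hx⟩,
    fun ⟨hn, hm, hx⟩ => ⟨⟨hm, hx⟩, fun i => hn.trans (hx i), hn⟩⟩

def snocEquiv (j n : ℕ) : (Σ x : {x // n < x}, DecTuple j x) ≃ DecTuple (j + 1) n where
  toFun p := ⟨Fin.snoc p.2.1 p.1.1, snoc_prop_iff.2 ⟨p.1.2, p.2.2⟩⟩
  invFun m :=
    have h := snoc_prop_iff.1 ((Fin.snoc_init_self m.1).symm ▸ m.2)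
    ⟨⟨m.1 (Fin.last j), h.1⟩, ⟨Fin.init m.1, h.2⟩⟩
  left_inv p := Sigma.subtype_ext (Subtype.ext (by simp)) (by simp)
  right_inv m := Subtype.ext (Fin.snoc_init_self m.1)

theorem tsum_succ (f : (Fin (j + 1) → ℕ) → ℝ≥0∞) :
    ∑' m : DecTuple (j + 1) n, f m.1 =
      ∑' x : {x // n < x}, ∑' m : DecTuple j x, f (Fin.snoc m.1 x.1) := by
  rw [← (snocEquiv j n).tsum_eq, ENNReal.tsum_sigma']
  rfl

end DecTuple

noncomputable def nestedSum {j : ℕ} (a : Fin j → ℕ → ℝ≥0∞) (n : ℕ) : ℝ≥0∞ :=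
  ∑' m : DecTuple j n, ∏ i, a i (m.1 i)

noncomputable def tailSum (v : ℕ → ℝ≥0∞) (n : ℕ) : ℝ≥0∞ := ∑' x : {x // n < x}, v x

theorem nestedSum_zero (a : Fin 0 → ℕ → ℝ≥0∞) (n : ℕ) : nestedSum a n = 1 := by
  let _ : Unique (DecTuple 0 n) :=
    ⟨⟨⟨Fin.elim0, fun i => i.elim0, fun i => i.elim0⟩⟩,
      fun _ => Subtype.ext (Subsingleton.elim _ _)⟩
  simp [nestedSum]

theorem nestedSum_succ {j : ℕ} (a : Fin (j + 1) → ℕ → ℝ≥0∞) (n : ℕ) :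
    nestedSum a n =
      ∑' x : {x // n < x}, a (Fin.last j) x * nestedSum (fun i => a i.castSucc) x := by
  rw [nestedSum, DecTuple.tsum_succ fun m => ∏ i, a i (m i)]
  simp only [nestedSum, ← ENNReal.tsum_mul_left, Fin.prod_univ_castSucc, Fin.snoc_castSucc,
    Fin.snoc_last, mul_comm]

theorem nestedSum_one (a : Fin 1 → ℕ → ℝ≥0∞) (n : ℕ) : nestedSum a n = tailSum (a 0) n := by
  simp [nestedSum_succ, nestedSum_zero, tailSum]

theorem nestedSum_le_tailSum {u v : ℕ → ℝ≥0∞}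
    (huv : ∀ n, ∑' x : {x // n < x}, u x * tailSum v x ≤ tailSum v n) :
    ∀ {j : ℕ} (a : Fin (j + 1) → ℕ → ℝ≥0∞), (∀ x, a 0 x ≤ v x) →
      (∀ (i : Fin j) x, a i.succ x ≤ u x) → ∀ n, nestedSum a n ≤ tailSum v n
  | 0, a, ha0, _, n => by
    rw [nestedSum_one]
    exact ENNReal.tsum_le_tsum fun x => ha0 x
  | j + 1, a, ha0, ha, n => by
    rw [nestedSum_succ]
    refine le_trans (ENNReal.tsum_le_tsum fun x => mul_le_mul' (ha (Fin.last j) x) ?_) (huv n)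
    refine nestedSum_le_tailSum huv (fun i => a i.castSucc) ha0 (fun i y => ?_) x
    simpa [← Fin.succ_castSucc] using ha i.castSucc y

theorem tailSum_eq_tsum_add (v : ℕ → ℝ≥0∞) (n : ℕ) : tailSum v n = ∑' i, v (n + 1 + i) := by
  let e : ℕ ≃ {x // n < x} :=
    { toFun i := ⟨n + 1 + i, by omega⟩
      invFun x := x.1 - (n + 1)
      left_inv i := by simp
      right_inv x := Subtype.ext (by have := x.2; simp only; omega) }
  exact (e.tsum_eq fun x => v x).symm

theorem tailSum_eq_add (v : ℕ → ℝ≥0∞) (n : ℕ) : tailSum v n = v (n + 1) + tailSum v (n + 1) := by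
  rw [tailSum_eq_tsum_add, tailSum_eq_tsum_add, tsum_eq_zero_add' ENNReal.summable]
  congr 2 with i
  ring_nf

theorem ENNReal.tsum_le_of_add_le {f h : ℕ → ℝ≥0∞} (hfh : ∀ i, f i + h (i + 1) ≤ h i) :
    ∑' i, f i ≤ h 0 := by
  have hpartial (N : ℕ) : ∑ i ∈ Finset.range N, f i + h N ≤ h 0 := by
    induction N with
    | zero => simp
    | succ N ih =>
      rw [Finset.sum_range_succ, add_assoc]
      exact (add_le_add le_rfl (hfh N)).trans ih
  exact ENNReal.tsum_le_of_sum_range_le fun N => le_self_add.trans (hpartial N)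

section QInteger

variable {q : ℝ}

theorem qint_eq_geom_sum (hq : q ≠ 1) (m : ℕ) : qint q m = ∑ i ∈ range m, q ^ i := by
  rw [geom_sum_eq hq, qint, ← neg_sub (q ^ m), ← neg_sub q, neg_div_neg_eq]

theorem qint_nonneg (hq : 0 ≤ q) (m : ℕ) : 0 ≤ qint q m := by
  rcases eq_or_ne q 1 with rfl | hq1
  · simp [qint]
  · rw [qint_eq_geom_sum hq1]
    positivity

theorem one_le_qint (hq0 : 0 ≤ q) (hq1 : q ≠ 1) {m : ℕ} (hm : 1 ≤ m) : 1 ≤ qint q m := by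
  rw [qint_eq_geom_sum hq1, ← Nat.sub_add_cancel hm, Finset.sum_range_succ']
  simp only [pow_zero, le_add_iff_nonneg_left]
  positivity

theorem qint_le_self (hq0 : 0 ≤ q) (hq1 : q < 1) (m : ℕ) : qint q m ≤ m := by
  rw [qint_eq_geom_sum hq1.ne]
  calc ∑ i ∈ range m, q ^ i ≤ ∑ i ∈ range m, (1 : ℝ) :=
        Finset.sum_le_sum fun i _ => pow_le_one₀ hq0 hq1.le
    _ = m := by simp

theorem qint_succ (hq : q ≠ 1) (m : ℕ) : qint q (m + 1) = 1 + q * qint q m := by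
  rw [qint_eq_geom_sum hq, qint_eq_geom_sum hq, Finset.sum_range_succ', Finset.mul_sum]
  simp only [pow_succ', pow_zero, add_comm]

theorem qint_one (hq : q ≠ 1) : qint q 1 = 1 := by
  simp [qint_eq_geom_sum hq]

theorem pow_div_qint_pow_nonneg (hq : 0 ≤ q) (c m : ℕ) : 0 ≤ q ^ (m * (c - 1)) / qint q m ^ c :=
  div_nonneg (pow_nonneg hq _) (pow_nonneg (qint_nonneg hq m) c)

end QInteger

noncomputable def qWeight (q : ℝ) (c m : ℕ) : ℝ≥0∞ :=
  ENNReal.ofReal (q ^ (m * (c - 1)) / qint q m ^ c)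

section QWeight

variable {q : ℝ}

theorem qWeight_two (m : ℕ) : qWeight q 2 m = ENNReal.ofReal (q ^ m / qint q m ^ 2) := by
  simp [qWeight]

theorem qWeight_le_qWeight_two (hq0 : 0 ≤ q) (hq1 : q < 1) {c : ℕ} (hc : 2 ≤ c) (m : ℕ) :
    qWeight q c m ≤ qWeight q 2 m := by
  rcases Nat.eq_zero_or_pos m with rfl | hm
  · simp [qWeight, qint, zero_pow (by omega : c ≠ 0)]
  have hqint := one_le_qint hq0 hq1.ne hm
  refine ENNReal.ofReal_le_ofReal (div_le_div₀ (by positivity) ?_ (by positivity)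
    (pow_le_pow_right₀ hqint hc))
  exact pow_le_pow_of_le_one hq0 hq1.le (Nat.mul_le_mul_left m (by omega))

theorem qWeight_le_inv_qint (hq0 : 0 ≤ q) (hq1 : q < 1) {c : ℕ} (hc : 1 ≤ c) (m : ℕ) :
    qWeight q c m ≤ ENNReal.ofReal (qint q m)⁻¹ := by
  rcases Nat.eq_zero_or_pos m with rfl | hm
  · simp [qWeight, qint, zero_pow (by omega : c ≠ 0)]
  have hqint := one_le_qint hq0 hq1.ne hm
  rw [inv_eq_one_div]
  exact ENNReal.ofReal_le_ofReal (div_le_div₀ zero_le_one (pow_le_one₀ hq0 hq1.le)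
    (by positivity) (le_self_pow₀ hqint (by omega)))

theorem qWeight_two_add_le (hq0 : 0 ≤ q) (hq1 : q < 1) {m : ℕ} (hm : 1 ≤ m) :
    qWeight q 2 (m + 1) + ENNReal.ofReal (q ^ (m + 2) / qint q (m + 1)) ≤
      ENNReal.ofReal (q ^ (m + 1) / qint q m) := by
  have ha : 1 ≤ qint q m := one_le_qint hq0 hq1.ne hm
  have hab : qint q m ≤ qint q (m + 1) := by
    rw [qint_eq_geom_sum hq1.ne, qint_eq_geom_sum hq1.ne, Finset.sum_range_succ]
    exact le_add_of_nonneg_right (by positivity)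
  have hb : qint q (m + 1) = 1 + q * qint q m := qint_succ hq1.ne m
  rw [qWeight_two, ← ENNReal.ofReal_add (by positivity)
    (div_nonneg (by positivity) (qint_nonneg hq0 _))]
  refine ENNReal.ofReal_le_ofReal ?_
  generalize qint q m = a, qint q (m + 1) = b at *
  have hb0 : 0 < b := by linarith
  calc q ^ (m + 1) / b ^ 2 + q ^ (m + 2) / b = q ^ (m + 1) * (a + q * a * b) / (a * b ^ 2) := by
        field_simp
        ring
    _ ≤ q ^ (m + 1) * (b + q * a * b) / (a * b ^ 2) := by gcongr
    _ = q ^ (m + 1) / a := by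
        rw [show b + q * a * b = b ^ 2 by rw [hb]; ring]
        field_simp

end QWeight

section QWeightTail

variable {q : ℝ}

theorem tailSum_qWeight_two_le (hq0 : 0 ≤ q) (hq1 : q < 1) {n : ℕ} (hn : 1 ≤ n) :
    tailSum (qWeight q 2) n ≤ ENNReal.ofReal (q ^ (n + 1) / qint q n) := by
  rw [tailSum_eq_tsum_add]
  refine ENNReal.tsum_le_of_add_le
    (h := fun i => ENNReal.ofReal (q ^ (n + i + 1) / qint q (n + i))) (fun i => ?_)
    |>.trans_eq (by simp)
  convert qWeight_two_add_le hq0 hq1 (m := n + i) (by omega) using 3 <;> ring_nf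

theorem tsum_inv_qint_mul_tailSum_le (hq0 : 0 ≤ q) (hq1 : q < 1) (n : ℕ) :
    ∑' x : {x // n < x}, ENNReal.ofReal (qint q x)⁻¹ * tailSum (qWeight q 2) x ≤
      ENNReal.ofReal q * tailSum (qWeight q 2) n := by
  rw [tailSum, ← ENNReal.tsum_mul_left]
  refine ENNReal.tsum_le_tsum fun x => ?_
  have hx : 1 ≤ x.1 := Nat.zero_lt_of_lt x.2
  have hqint : 0 < qint q x := zero_lt_one.trans_le (one_le_qint hq0 hq1.ne hx)
  calc ENNReal.ofReal (qint q x)⁻¹ * tailSum (qWeight q 2) x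
      ≤ ENNReal.ofReal (qint q x)⁻¹ * ENNReal.ofReal (q ^ (x.1 + 1) / qint q x) := by
        gcongr
        exact tailSum_qWeight_two_le hq0 hq1 hx
    _ = ENNReal.ofReal q * qWeight q 2 x := by
        rw [qWeight_two, ← ENNReal.ofReal_mul (by positivity), ← ENNReal.ofReal_mul hq0]
        congr 1
        field_simp
        ring

theorem tailSum_qWeight_two_ne_top (hq0 : 0 ≤ q) (hq1 : q < 1) :
    tailSum (qWeight q 2) 0 ≠ ⊤ := by
  rw [tailSum_eq_add]
  exact ENNReal.add_ne_top.2 ⟨ENNReal.ofReal_ne_top, ne_top_of_le_ne_top ENNReal.ofReal_ne_top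
    (tailSum_qWeight_two_le hq0 hq1 le_rfl)⟩

theorem tailSum_qWeight_two_ne_zero (hq0 : 0 < q) (hq1 : q < 1) :
    tailSum (qWeight q 2) 0 ≠ 0 := by
  rw [tailSum_eq_add, qWeight_two, qint_one hq1.ne]
  simp [hq0]

end QWeightTail

theorem tsum_eq_toReal_tsum_ofReal {α : Type*} {f : α → ℝ} (hf : ∀ a, 0 ≤ f a) :
    ∑' a, f a = (∑' a, ENNReal.ofReal (f a)).toReal := by
  rw [ENNReal.tsum_toReal_eq fun _ => ENNReal.ofReal_ne_top]
  simp [ENNReal.toReal_ofReal, hf]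

theorem qZeta_eq_toReal_nestedSum {q : ℝ} (hq : 0 ≤ q) {d : ℕ} (k : Fin d → ℕ) (n : ℕ) :
    qZeta q k n = (nestedSum (fun i => qWeight q (k i)) n).toReal := by
  have hW := pow_div_qint_pow_nonneg hq
  rw [qZeta, tsum_eq_toReal_tsum_ofReal fun m => Finset.prod_nonneg fun i _ => hW _ _, nestedSum]
  simp only [ENNReal.ofReal_prod_of_nonneg fun i _ => hW _ _, qWeight]

theorem qZetaR_eq_toReal_tsum {q : ℝ} (hq : 0 ≤ q) {d : ℕ} (k : Fin d → ℕ) (r : ℕ) :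
    qZetaR q k r = (∑' x : {x // 0 < x},
      ENNReal.ofReal ((x : ℝ) ^ r)⁻¹ * nestedSum (fun i => qWeight q (k i)) x).toReal := by
  have hW := pow_div_qint_pow_nonneg hq
  rw [qZetaR, tsum_eq_toReal_tsum_ofReal fun m =>
    div_nonneg (Finset.prod_nonneg fun i _ => hW _ _) (by positivity)]
  congr 1
  rw [DecTuple.tsum_succ (n := 0) fun m => ENNReal.ofReal
    ((∏ i : Fin d, q ^ (m i.castSucc * (k i - 1)) / qint q (m i.castSucc) ^ k i) /
      (m (Fin.last d) : ℝ) ^ r)]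
  refine tsum_congr fun x => ?_
  rw [nestedSum, ← ENNReal.tsum_mul_left]
  refine tsum_congr fun m => ?_
  simp only [Fin.snoc_castSucc, Fin.snoc_last]
  rw [div_eq_mul_inv, ENNReal.ofReal_mul (Finset.prod_nonneg fun i _ => hW _ _),
    ENNReal.ofReal_prod_of_nonneg fun i _ => hW _ _, mul_comm]
  rfl

theorem inv_pow_le_inv_qint {q : ℝ} (hq0 : 0 ≤ q) (hq1 : q < 1) {r x : ℕ} (hr : 0 < r)
    (hx : 1 ≤ x) :
    ((x : ℝ) ^ r)⁻¹ ≤ (qint q x)⁻¹ := by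
  refine inv_anti₀ (zero_lt_one.trans_le (one_le_qint hq0 hq1.ne hx)) ?_
  calc qint q x ≤ x := qint_le_self hq0 hq1 x
    _ ≤ (x : ℝ) ^ r := le_self_pow₀ (by exact_mod_cast hx) hr.ne'

theorem stmt10 (d : ℕ) (hd : 0 < d) (k : Fin d → ℕ) (hk1 : 2 ≤ k ⟨0, hd⟩)
    (hk : ∀ i, 1 ≤ k i) (r : ℕ) (hr : 0 < r) (q : ℝ) (hq : q ∈ Set.Ioo (0:ℝ) 1) :
    qZetaR q k r < qZeta q (fun _ : Fin 1 => 2) 0 := by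
  obtain ⟨hq0, hq1⟩ := hq
  obtain ⟨d, rfl⟩ : ∃ d', d = d' + 1 := ⟨d - 1, by omega⟩
  set T := tailSum (qWeight q 2)
  have hkey := tsum_inv_qint_mul_tailSum_le hq0.le hq1
  have hnested (x : ℕ) : nestedSum (fun i => qWeight q (k i)) x ≤ T x :=
    nestedSum_le_tailSum
      (fun n => (hkey n).trans (mul_le_of_le_one_left' (ENNReal.ofReal_le_one.2 hq1.le))) _
      (qWeight_le_qWeight_two hq0.le hq1 hk1) (fun i => qWeight_le_inv_qint hq0.le hq1 (hk _)) x
  have hbound : ∑' x : {x // 0 < x}, ENNReal.ofReal ((x : ℝ) ^ r)⁻¹ *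
      nestedSum (fun i => qWeight q (k i)) x ≤ ENNReal.ofReal q * T 0 :=
    (ENNReal.tsum_le_tsum fun x : {x // 0 < x} => mul_le_mul'
      (ENNReal.ofReal_le_ofReal (inv_pow_le_inv_qint hq0.le hq1 hr x.2)) (hnested x)).trans (hkey 0)
  have hT : ENNReal.ofReal q * T 0 < T 0 := by
    simpa using ENNReal.mul_lt_mul_left (tailSum_qWeight_two_ne_zero hq0 hq1)
      (tailSum_qWeight_two_ne_top hq0.le hq1) (ENNReal.ofReal_lt_one.2 hq1)
  rw [qZetaR_eq_toReal_tsum hq0.le, qZeta_eq_toReal_nestedSum hq0.le, nestedSum_one]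
  exact ENNReal.toReal_strict_mono (tailSum_qWeight_two_ne_top hq0.le hq1) (hbound.trans_lt hT)
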